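/- Let G be a connected graph, h a hyperbolic graph automorphism of G (no fixed vertex, positive translation length m = |h|), and suppose v ∈ Min(h), i.e., d(v, h(v)) = m. Suppose u is a vertex lying on a geodesic from h(v) to h(w) (for some vertex w) such that h(v), u, h(u), h(w) occur in this order along the geodesic. Then d(u, h(u)) = d(v, u) − d(h(v), u) ≤ m, hence u ∈ Min(h). -/
import Mathlib

private lemma iso_dist {V : Type*} {G : SimpleGraph V} (hconn : G.Connected)
    (h : G ≃g G) (a b : V) : G.dist (h a) (h b) = G.dist a b := by
  have key : ∀ (φ : G ≃g G) (a b : V), G.dist (φ a) (φ b) ≤ G.dist a b := by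
    intro φ a b
    obtain ⟨p, hp⟩ := (hconn a b).exists_walk_length_eq_dist
    calc G.dist (φ a) (φ b) ≤ (p.map φ.toHom).length := SimpleGraph.dist_le _
      _ = p.length := p.length_map _
      _ = G.dist a b := hp
  refine le_antisymm (key h a b) ?_
  have := key h.symm (h a) (h b)
  simpa using this

/-- if `u` lies on a geodesic from `h(v)` to `h(w)` with
`h(v), u, h(u), h(w)` in this order, and `v` has minimal displacement `m`,
then `d(u, h(u)) = d(v,u) - d(h(v),u) ≤ m`, hence `u ∈ Min(h)`. -/
theorem stmt10 {V : Type*} (G : SimpleGraph V) (hconn : G.Connected)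
    (h : G ≃g G) (m : ℕ) (hmpos : 0 < m)
    (hlb : ∀ x : V, m ≤ G.dist x (h x))
    (v : V) (hv : G.dist v (h v) = m)
    (u w : V)
    (horder : G.dist (h v) u + G.dist u (h u) + G.dist (h u) (h w)
      = G.dist (h v) (h w)) :
    G.dist u (h u) = G.dist v u - G.dist (h v) u ∧
      G.dist u (h u) ≤ m ∧ G.dist u (h u) = m := by
  have e1 : G.dist (h u) (h w) = G.dist u w := iso_dist hconn h u w
  have e2 : G.dist (h v) (h w) = G.dist v w := iso_dist hconn h v w
  have t1 : G.dist v w ≤ G.dist v u + G.dist u w := hconn.dist_triangle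
  have t2 : G.dist v u ≤ G.dist v (h v) + G.dist (h v) u := hconn.dist_triangle
  have lb := hlb u
  omega
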